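/- arXiv:2602.05076 — 7 statements merged into one kernel-verified Lean document; each statement's English description precedes it below -/
import Mathlib

section
/- Let I be an ideal minimally generated by square-free monomials m_1,…,m_q in R = k[x_1,…,x_n] and let ψ_I : S_[q] → R be the associated ring homomorphism. For any two monomials μ, ν in S_[q], ψ_I(lcm(μ, ν)) = lcm(ψ_I(μ), ψ_I(ν)). -/
open MvPolynomial

/-- Index type: nonempty subsets of `[q]`. -/
abbrev EIdx (q : ℕ) := {A : Finset (Fin q) // A.Nonempty}

/-- `θ_I(A)`, where the square-free monomial `m_j` is recorded by its support `S j`. -/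
def thetaSet {n q : ℕ} (S : Fin q → Finset (Fin n)) (A : Finset (Fin q)) :
    Finset (Fin n) :=
  A.inf S \ Aᶜ.sup S

/-- The ring homomorphism `ψ_I : S_[q] → R`, `y_A ↦ ∏_{x ∈ θ_I(A)} x`. -/
noncomputable def psiI (k : Type*) [Field k] {n q : ℕ}
    (S : Fin q → Finset (Fin n)) :
    MvPolynomial (EIdx q) k →+* MvPolynomial (Fin n) k :=
  (aeval fun A : EIdx q => ∏ x ∈ thetaSet S A.1, X x).toRingHom

/-!
A variable `x` lies in `θ_I(A)` only for `A = {j | x ∈ Supp(m_j)}`, so the sets `θ_I(A)` are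
pairwise disjoint. Hence the exponent of `x` in `ψ_I(y^e)` is `e_A` for that single `A` (or `0`),
and the exponent vector of `ψ_I(y^{max(b,c)})` is the pointwise maximum of those of `ψ_I(y^b)`
and `ψ_I(y^c)`, i.e. it is their least common multiple.
-/

open Function

namespace MvPolynomial

variable {σ R : Type*} [CommSemiring R]

theorem monomial_one_dvd_iff_forall_le {a : σ →₀ ℕ} {w : MvPolynomial σ R} :
    monomial a (1 : R) ∣ w ↔ ∀ d ∈ w.support, a ≤ d := by
  rw [← Ideal.mem_span_singleton, ← Set.image_singleton (f := fun s => monomial s (1 : R)),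
    mem_ideal_span_monomial_image]
  simp only [Set.mem_singleton_iff, exists_eq_left]

theorem monomial_one_sup_dvd {a b : σ →₀ ℕ} {w : MvPolynomial σ R}
    (ha : monomial a (1 : R) ∣ w) (hb : monomial b (1 : R) ∣ w) :
    monomial (a ⊔ b) (1 : R) ∣ w := by
  rw [monomial_one_dvd_iff_forall_le] at *
  exact fun d hd => sup_le (ha d hd) (hb d hd)

end MvPolynomial

section BlockExponent

variable {ι σ : Type*} [Fintype ι]

noncomputable def blockExponent (θ : ι → Finset σ) (e : ι → ℕ) : σ →₀ ℕ :=
  ∑ i, ∑ x ∈ θ i, Finsupp.single x (e i)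

variable {θ : ι → Finset σ}

theorem blockExponent_apply_of_mem (hθ : Pairwise (Disjoint on θ)) (e : ι → ℕ) {i : ι}
    {x : σ} (hx : x ∈ θ i) : blockExponent θ e x = e i := by
  classical
  simp only [blockExponent, Finsupp.finsetSum_apply, Finsupp.single_apply, Finset.sum_ite_eq']
  rw [Finset.sum_eq_single_of_mem i (Finset.mem_univ i)]
  · simp [hx]
  · intro j _ hji
    simp [Finset.disjoint_left.mp (hθ hji.symm) hx]

theorem blockExponent_apply_of_forall_notMem (e : ι → ℕ) {x : σ} (hx : ∀ i, x ∉ θ i) :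
    blockExponent θ e x = 0 := by
  classical
  simp [blockExponent, Finsupp.finsetSum_apply, Finsupp.single_apply, hx]

theorem blockExponent_sup (hθ : Pairwise (Disjoint on θ)) (e f : ι → ℕ) :
    blockExponent θ (e ⊔ f) = blockExponent θ e ⊔ blockExponent θ f := by
  ext x
  by_cases hx : ∃ i, x ∈ θ i
  · obtain ⟨i, hi⟩ := hx
    simp only [Finsupp.sup_apply, blockExponent_apply_of_mem hθ _ hi, Pi.sup_apply]
  · push Not at hx
    simp only [Finsupp.sup_apply, blockExponent_apply_of_forall_notMem _ hx, max_self]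

theorem prod_prod_X_pow_eq_monomial {R : Type*} [CommSemiring R] (θ : ι → Finset σ)
    (e : ι → ℕ) :
    ∏ i, (∏ x ∈ θ i, (X x : MvPolynomial σ R)) ^ e i = monomial (blockExponent θ e) 1 := by
  simp only [blockExponent, monomial_sum_one, ← Finset.prod_pow, X_pow_eq_monomial]

end BlockExponent

theorem eq_filter_of_mem_thetaSet {n q : ℕ} {S : Fin q → Finset (Fin n)} {A : Finset (Fin q)}
    {x : Fin n} (hx : x ∈ thetaSet S A) : A = Finset.univ.filter (x ∈ S ·) := by
  obtain ⟨hxA, hxAc⟩ := Finset.mem_sdiff.1 hx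
  ext j
  rw [Finset.mem_filter, and_iff_right (Finset.mem_univ j)]
  refine ⟨fun hj => Finset.inf_le (f := S) hj hxA, fun hxj => ?_⟩
  by_contra hj
  exact hxAc (Finset.le_sup (f := S) (Finset.mem_compl.2 hj) hxj)

theorem thetaSet_pairwiseDisjoint {n q : ℕ} (S : Fin q → Finset (Fin n)) :
    Pairwise (Disjoint on thetaSet S) := fun _ _ hAB =>
  Finset.disjoint_left.2 fun _ hA hB =>
    hAB ((eq_filter_of_mem_thetaSet hA).trans (eq_filter_of_mem_thetaSet hB).symm)

theorem psiI_prod_X_pow (k : Type*) [Field k] {n q : ℕ} (S : Fin q → Finset (Fin n))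
    (e : EIdx q → ℕ) :
    psiI k S (∏ A, X A ^ e A) =
      monomial (blockExponent (fun A : EIdx q => thetaSet S A.1) e) 1 := by
  simp only [map_prod, map_pow, psiI, AlgHom.toRingHom_eq_coe, RingHom.coe_coe, aeval_X]
  exact prod_prod_X_pow_eq_monomial _ e

theorem stmt3_general (k : Type*) [Field k] (n q : ℕ)
    (S : Fin q → Finset (Fin n))
    (b c : EIdx q → ℕ) :
    -- `ψ_I (lcm (y^b, y^c))` is a least common multiple of `ψ_I (y^b)` and `ψ_I (y^c)`
    psiI k S (∏ A : EIdx q, X A ^ b A) ∣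
        psiI k S (∏ A : EIdx q, X A ^ max (b A) (c A)) ∧
    psiI k S (∏ A : EIdx q, X A ^ c A) ∣
        psiI k S (∏ A : EIdx q, X A ^ max (b A) (c A)) ∧
    ∀ w : MvPolynomial (Fin n) k,
      psiI k S (∏ A : EIdx q, X A ^ b A) ∣ w →
      psiI k S (∏ A : EIdx q, X A ^ c A) ∣ w →
      psiI k S (∏ A : EIdx q, X A ^ max (b A) (c A)) ∣ w := by
  have hθ : Pairwise (Disjoint on fun A : EIdx q => thetaSet S A.1) :=
    (thetaSet_pairwiseDisjoint S).comp_of_injective Subtype.val_injective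
  simp only [psiI_prod_X_pow, show (fun A => max (b A) (c A)) = b ⊔ c from rfl,
    blockExponent_sup hθ b c]
  exact ⟨monomial_one_dvd_monomial_one.2 le_sup_left,
    monomial_one_dvd_monomial_one.2 le_sup_right, fun w => monomial_one_sup_dvd⟩

theorem stmt3 (k : Type*) [Field k] (n q : ℕ)
    (S : Fin q → Finset (Fin n))
    (m : Fin q → MvPolynomial (Fin n) k)
    (hm : ∀ j, m j = ∏ x ∈ S j, X x)
    (I : Ideal (MvPolynomial (Fin n) k))
    (hI : I = Ideal.span (Set.range m))
    (hmin : ∀ i j : Fin q, i ≠ j → ¬ m i ∣ m j)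
    (b c : EIdx q → ℕ) :
    -- `ψ_I (lcm (y^b, y^c))` is a least common multiple of `ψ_I (y^b)` and `ψ_I (y^c)`
    psiI k S (∏ A : EIdx q, X A ^ b A) ∣
        psiI k S (∏ A : EIdx q, X A ^ max (b A) (c A)) ∧
    psiI k S (∏ A : EIdx q, X A ^ c A) ∣
        psiI k S (∏ A : EIdx q, X A ^ max (b A) (c A)) ∧
    ∀ w : MvPolynomial (Fin n) k,
      psiI k S (∏ A : EIdx q, X A ^ b A) ∣ w →
      psiI k S (∏ A : EIdx q, X A ^ c A) ∣ w →
      psiI k S (∏ A : EIdx q, X A ^ max (b A) (c A)) ∣ w :=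
  stmt3_general k n q S b c
end

section
/- Let I be an ideal minimally generated by square-free monomials m_1,…,m_q in R and ψ_I : S_[q] → R the associated ring homomorphism. If J and K are monomial ideals in S_[q], then the ideal of R generated by ψ_I(J ∩ K) equals the intersection of the ideal generated by ψ_I(J) with the ideal generated by ψ_I(K). -/
open MvPolynomial

/-- A monomial ideal: an ideal generated by a set of monomials. -/
def IsMonomialIdeal {k : Type*} [Field k] {σ : Type*}
    (J : Ideal (MvPolynomial σ k)) : Prop :=
  ∃ G : Set (σ →₀ ℕ), J = Ideal.span ((fun d => monomial d (1 : k)) '' G)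

/-!
`ψ_I` sends the monomial `y^d` to `x^{φ d}` with `φ d = ∑_A d_A θ_I(A)`, which is additive in `d`.
The sets `θ_I(A)` are pairwise disjoint, so `φ` also preserves `⊔`, i.e. `ψ_I` preserves lcms
of monomials. Since the image of a monomial ideal is generated by the images of its generators,
and the intersection of two monomial ideals is generated by the lcms of their generators, both
sides are generated by the monomials `x^{φ (d ⊔ e)} = x^{φ d ⊔ φ e}`.
-/

namespace MvPolynomial

variable {σ τ R : Type*} [CommSemiring R]

theorem span_monomial_inf_span_monomial (G H : Set (σ →₀ ℕ)) :
    Ideal.span ((fun d => monomial d (1 : R)) '' G) ⊓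
        Ideal.span ((fun d => monomial d (1 : R)) '' H) =
      Ideal.span ((fun d => monomial d (1 : R)) '' Set.image2 (· ⊔ ·) G H) := by
  ext f
  simp only [Ideal.mem_inf, mem_ideal_span_monomial_image, Set.exists_mem_image2, sup_le_iff]
  grind

theorem map_span_monomial {f : MvPolynomial σ R →+* MvPolynomial τ R}
    {φ : (σ →₀ ℕ) → τ →₀ ℕ} (hf : ∀ d, f (monomial d 1) = monomial (φ d) 1)
    (G : Set (σ →₀ ℕ)) :
    Ideal.map f (Ideal.span ((fun d => monomial d (1 : R)) '' G)) =
      Ideal.span ((fun d => monomial d (1 : R)) '' (φ '' G)) := by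
  rw [Ideal.map_span, Set.image_image, Set.image_image]
  simp only [hf]

theorem map_span_monomial_inf {f : MvPolynomial σ R →+* MvPolynomial τ R}
    {φ : (σ →₀ ℕ) → τ →₀ ℕ} (hf : ∀ d, f (monomial d 1) = monomial (φ d) 1)
    (hφ : ∀ d e, φ (d ⊔ e) = φ d ⊔ φ e) (G H : Set (σ →₀ ℕ)) :
    Ideal.map f (Ideal.span ((fun d => monomial d (1 : R)) '' G) ⊓
        Ideal.span ((fun d => monomial d (1 : R)) '' H)) =
      Ideal.map f (Ideal.span ((fun d => monomial d (1 : R)) '' G)) ⊓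
        Ideal.map f (Ideal.span ((fun d => monomial d (1 : R)) '' H)) := by
  rw [span_monomial_inf_span_monomial, map_span_monomial hf, map_span_monomial hf,
    map_span_monomial hf, span_monomial_inf_span_monomial, Set.image_image2_distrib hφ]

theorem aeval_monomial_monomial (v : σ → τ →₀ ℕ) (d : σ →₀ ℕ) :
    aeval (fun i => (monomial (v i) 1 : MvPolynomial τ R)) (monomial d (1 : R)) =
      monomial (Finsupp.linearCombination ℕ v d) 1 := by
  rw [aeval_monomial, map_one, one_mul, Finsupp.linearCombination_apply, Finsupp.sum,
    monomial_sum_one, Finsupp.prod]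
  simp only [monomial_pow, one_pow]

end MvPolynomial

theorem Finsupp.linearCombination_sup {ι τ : Type*} {v : ι → τ →₀ ℕ}
    (hv : Pairwise fun i j => Disjoint (v i).support (v j).support) (d e : ι →₀ ℕ) :
    linearCombination ℕ v (d ⊔ e) = linearCombination ℕ v d ⊔ linearCombination ℕ v e := by
  ext x
  by_cases h : ∃ i, x ∈ (v i).support
  · obtain ⟨i, hi⟩ := h
    have eval : ∀ l : ι →₀ ℕ, linearCombination ℕ v l x = l i * v i x := by
      intro l
      rw [linearCombination_apply, sum_apply, sum_eq_single i]
      · rfl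
      · intro j _ hji
        rw [smul_apply, notMem_support_iff.1 (Finset.disjoint_left.1 (hv hji.symm) hi), smul_zero]
      · intro; simp
    simp only [sup_apply, eval]
    exact max_mul_of_nonneg _ _ (Nat.zero_le _)
  · rw [not_exists] at h
    have eval : ∀ l : ι →₀ ℕ, linearCombination ℕ v l x = 0 := by
      intro l
      rw [linearCombination_apply, sum_apply]
      exact Finset.sum_eq_zero fun i _ => by simp [notMem_support_iff.1 (h i)]
    simp only [sup_apply, eval, max_self]

section Theta

variable {n q : ℕ} (S : Fin q → Finset (Fin n))

theorem thetaSet_subset_of_mem {A : Finset (Fin q)} {j : Fin q} (hj : j ∈ A) :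
    thetaSet S A ⊆ S j :=
  Finset.sdiff_subset.trans (Finset.inf_le hj)

theorem disjoint_thetaSet_of_notMem {A : Finset (Fin q)} {j : Fin q} (hj : j ∉ A) :
    Disjoint (S j) (thetaSet S A) :=
  Finset.disjoint_sdiff.mono_left (Finset.le_sup (Finset.mem_compl.2 hj))

theorem disjoint_thetaSet_of_ne {A B : Finset (Fin q)} (h : A ≠ B) :
    Disjoint (thetaSet S A) (thetaSet S B) := by
  have separated : ∀ {A B : Finset (Fin q)} {j}, j ∈ A → j ∉ B →
      Disjoint (thetaSet S A) (thetaSet S B) := fun hjA hjB =>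
    (disjoint_thetaSet_of_notMem S hjB).mono_left (thetaSet_subset_of_mem S hjA)
  by_cases hAB : A ⊆ B
  · obtain ⟨j, hjB, hjA⟩ := Finset.not_subset.1 fun hBA => h (hAB.antisymm hBA)
    exact (separated hjB hjA).symm
  · obtain ⟨j, hjA, hjB⟩ := Finset.not_subset.1 hAB
    exact separated hjA hjB

/-- The exponent vector of `ψ_I(y_A)`. -/
noncomputable def thetaExp (A : Finset (Fin q)) : Fin n →₀ ℕ :=
  ∑ x ∈ thetaSet S A, Finsupp.single x 1

theorem support_thetaExp (A : Finset (Fin q)) : (thetaExp S A).support = thetaSet S A := by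
  ext x
  simp [thetaExp, Finsupp.finsetSum_apply, Finsupp.single_apply]

theorem psiI_monomial (k : Type*) [Field k] (d : EIdx q →₀ ℕ) :
    psiI k S (monomial d 1) =
      monomial (Finsupp.linearCombination ℕ (fun A : EIdx q => thetaExp S A.1) d) 1 := by
  have generators : (fun A : EIdx q => ∏ x ∈ thetaSet S A.1, (X x : MvPolynomial (Fin n) k)) =
      fun A => monomial (thetaExp S A.1) 1 :=
    funext fun A => (monomial_sum_one _ _).symm
  rw [psiI, AlgHom.toRingHom_eq_coe, AlgHom.coe_toRingHom, generators,
    aeval_monomial_monomial]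

theorem pairwise_disjoint_support_thetaExp :
    Pairwise fun A B : EIdx q => Disjoint (thetaExp S A.1).support (thetaExp S B.1).support :=
  fun A B hAB => by
    simpa only [support_thetaExp] using disjoint_thetaSet_of_ne S (Subtype.coe_injective.ne hAB)

end Theta

theorem stmt4_general (k : Type*) [Field k] (n q : ℕ)
    (S : Fin q → Finset (Fin n))
    (J K : Ideal (MvPolynomial (EIdx q) k))
    (hJ : IsMonomialIdeal J) (hK : IsMonomialIdeal K) :
    Ideal.map (psiI k S) (J ⊓ K) =
      Ideal.map (psiI k S) J ⊓ Ideal.map (psiI k S) K := by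
  obtain ⟨G, rfl⟩ := hJ
  obtain ⟨H, rfl⟩ := hK
  exact map_span_monomial_inf (psiI_monomial S k)
    (Finsupp.linearCombination_sup (pairwise_disjoint_support_thetaExp S)) G H

theorem stmt4 (k : Type*) [Field k] (n q : ℕ)
    (S : Fin q → Finset (Fin n))
    (m : Fin q → MvPolynomial (Fin n) k)
    (hm : ∀ j, m j = ∏ x ∈ S j, X x)
    (I : Ideal (MvPolynomial (Fin n) k))
    (hI : I = Ideal.span (Set.range m))
    (hmin : ∀ i j : Fin q, i ≠ j → ¬ m i ∣ m j)
    (J K : Ideal (MvPolynomial (EIdx q) k))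
    (hJ : IsMonomialIdeal J) (hK : IsMonomialIdeal K) :
    Ideal.map (psiI k S) (J ⊓ K) =
      Ideal.map (psiI k S) J ⊓ Ideal.map (psiI k S) K :=
  stmt4_general k n q S J K hJ hK
end

section
/- Let φ_n : k[z_1,…,z_n] → k[z_1,…,z_{n-1}] be the ring map sending z_n to 1 and fixing z_i for i < n. For any monomial ideal J in k[z_1,…,z_n], the ideal generated by φ_n applied to the integral closure of J equals the integral closure of the ideal generated by φ_n(J). That is, φ_n(\overline{J})R' = \overline{φ_n(J)R'} where R' = k[z_1,…,z_{n-1}]. -/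
/-!
`⊆`: the integral closure of `φ(J)R'` is an ideal (the preimage of the integral closure of the
Rees algebra `R'[It]` under `x ↦ x t`), and it contains `φ(\overline{J})`.

`⊇`: homogenize. An equation of integral dependence of `x` over `φ(J)R'` has coefficients
`a_i ∈ φ(J^i)R'`; since `J^i` is monomial, `a_i z_n^m ∈ J^i` for all large `m`. For one `N`
good for every `i`, `x z_n^N` satisfies the equation with coefficients `a_i z_n^{N i}`, so it
lies in `\overline{J}`, and `φ(x z_n^N) = x`.
-/

open MvPolynomial

/-- The integral closure of an ideal `J`: elements satisfying an equation
`x^s + a_1 x^{s-1} + ⋯ + a_s = 0` with `a_i ∈ J^i`. -/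
def idealIntCl {R : Type*} [CommRing R] (J : Ideal R) : Set R :=
  {x | ∃ s : ℕ, 0 < s ∧ ∃ a : ℕ → R,
    (∀ i ∈ Finset.Icc 1 s, a i ∈ J ^ i) ∧
    x ^ s + ∑ i ∈ Finset.Icc 1 s, a i * x ^ (s - i) = 0}

/-- `φ_n : k[z_1,…,z_n] → k[z_1,…,z_{n-1}]`, sending the last variable to `1`. -/
noncomputable def deleteLastVar (k : Type*) [Field k] (n : ℕ) :
    MvPolynomial (Fin (n + 1)) k →+* MvPolynomial (Fin n) k :=
  (aeval fun i : Fin (n + 1) => Fin.lastCases 1 (fun j => X j) i).toRingHom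

open Filter

section IdealIntCl

variable {R : Type*} [CommRing R] {I : Ideal R} {x : R}

theorem isIntegral_monomial_one_of_mem_idealIntCl (hx : x ∈ idealIntCl I) :
    IsIntegral (reesAlgebra I) (Polynomial.monomial 1 x) := by
  obtain ⟨s, hs, a, ha, heq⟩ := hx
  set P : Polynomial (Polynomial R) := Polynomial.X ^ s +
    ∑ i ∈ Finset.Icc 1 s, Polynomial.C (Polynomial.monomial i (a i)) * Polynomial.X ^ (s - i)
  have hlifts : P ∈ Polynomial.lifts (algebraMap (reesAlgebra I) (Polynomial R)) := by
    refine add_mem (pow_mem (Polynomial.X_mem_lifts _) _)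
      (sum_mem fun i hi => mul_mem ?_ (pow_mem (Polynomial.X_mem_lifts _) _))
    exact Polynomial.C_mem_lifts _ (⟨_, reesAlgebra.monomial_mem.2 (ha i hi)⟩ : reesAlgebra I)
  have hmonic : P.Monic := by
    refine Polynomial.monic_X_pow_add ((Polynomial.degree_sum_le _ _).trans_lt ?_)
    refine (Finset.sup_lt_iff (WithBot.bot_lt_coe s)).2 fun i hi => ?_
    refine (Polynomial.degree_C_mul_X_pow_le _ _).trans_lt ?_
    have := Finset.mem_Icc.1 hi
    exact Nat.cast_lt.2 (by omega)
  obtain ⟨q, hqP, -, hq⟩ := Polynomial.lifts_and_natDegree_eq_and_monic hlifts hmonic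
  refine ⟨q, hq, ?_⟩
  rw [← Polynomial.eval_map, hqP]
  have hterm : ∀ i ∈ Finset.Icc 1 s,
      Polynomial.monomial i (a i) * Polynomial.monomial 1 x ^ (s - i) =
        Polynomial.monomial s (a i * x ^ (s - i)) := by
    intro i hi
    rw [Polynomial.monomial_pow, Polynomial.monomial_mul_monomial, one_mul,
      Nat.add_sub_cancel' (Finset.mem_Icc.1 hi).2]
  simp only [P, Polynomial.eval_add, Polynomial.eval_pow, Polynomial.eval_X,
    Polynomial.eval_finsetSum, Polynomial.eval_mul, Polynomial.eval_C]
  rw [Finset.sum_congr rfl hterm, Polynomial.monomial_pow, one_mul, ← map_sum, ← map_add, heq,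
    map_zero]

theorem mem_idealIntCl_of_aeval_monomial_one_eq_zero {p : Polynomial (reesAlgebra I)} {s : ℕ}
    (hs : 0 < s) (hps : p.coeff s = 1) (hpdeg : p.natDegree ≤ s)
    (hpx : Polynomial.aeval (Polynomial.monomial 1 x) p = 0) : x ∈ idealIntCl I := by
  let a : ℕ → R := fun j => (p.coeff (s - j) : Polynomial R).coeff j
  have ha0 : a 0 = 1 := by simp [a, hps]
  refine ⟨s, hs, a, fun j _ => (mem_reesAlgebra_iff I _).1 (p.coeff (s - j)).2 j, ?_⟩
  have hterm : ∀ i ∈ Finset.range (s + 1),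
      (p.coeff i • Polynomial.monomial 1 x ^ i).coeff s = a (s - i) * x ^ (s - (s - i)) := by
    intro i hi
    have hi : i ≤ s := Finset.mem_range_succ_iff.1 hi
    have hcoeff := Polynomial.coeff_mul_monomial (p.coeff i : Polynomial R) i (s - i) (x ^ i)
    rw [Nat.sub_add_cancel hi] at hcoeff
    simp only [a, Nat.sub_sub_self hi, Algebra.smul_def, Polynomial.monomial_pow, one_mul]
    exact hcoeff
  calc x ^ s + ∑ i ∈ Finset.Icc 1 s, a i * x ^ (s - i)
      = ∑ i ∈ Finset.range (s + 1), a i * x ^ (s - i) := by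
        rw [Finset.sum_range_eq_add_Ico _ (by omega), Finset.Ico_add_one_right_eq_Icc, ha0,
          one_mul, Nat.sub_zero]
    _ = (Polynomial.aeval (Polynomial.monomial 1 x) p).coeff s := by
        rw [Polynomial.aeval_eq_sum_range' (Nat.lt_succ_of_le hpdeg), Polynomial.finsetSum_coeff,
          Finset.sum_congr rfl hterm, ← Finset.sum_range_reflect, Nat.add_sub_cancel]
    _ = 0 := by rw [hpx, Polynomial.coeff_zero]

theorem mem_idealIntCl_of_isIntegral_monomial_one
    (hx : IsIntegral (reesAlgebra I) (Polynomial.monomial 1 x)) : x ∈ idealIntCl I := by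
  obtain ⟨q, hq, hqx⟩ := hx
  -- Passing to `q * X` makes the degree positive, also when `R` is the zero ring.
  refine mem_idealIntCl_of_aeval_monomial_one_eq_zero (p := q * Polynomial.X) q.natDegree.succ_pos
    (by rw [Polynomial.coeff_mul_X, hq.coeff_natDegree]) ?_
    (by rw [map_mul, Polynomial.aeval_def, hqx, zero_mul])
  have := Polynomial.natDegree_mul_le (p := q) (q := Polynomial.X)
  have := Polynomial.natDegree_X_le (R := reesAlgebra I)
  omega

theorem mem_idealIntCl_iff_isIntegral_monomial_one :
    x ∈ idealIntCl I ↔ IsIntegral (reesAlgebra I) (Polynomial.monomial 1 x) :=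
  ⟨isIntegral_monomial_one_of_mem_idealIntCl, mem_idealIntCl_of_isIntegral_monomial_one⟩

/-- `idealIntCl I` is the preimage under the `R`-linear map `x ↦ x t` of the integral closure of
the Rees algebra `R[It]` in `R[t]`, hence an ideal. -/
noncomputable def idealIntClIdeal (I : Ideal R) : Ideal R :=
  (Subalgebra.toSubmodule
    ((integralClosure (reesAlgebra I) (Polynomial R)).restrictScalars R)).comap
      (Polynomial.monomial 1)

theorem coe_idealIntClIdeal : (idealIntClIdeal I : Set R) = idealIntCl I :=
  Set.ext fun _ => mem_idealIntCl_iff_isIntegral_monomial_one.symm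

variable {S F : Type*} [CommRing S] [FunLike F R S] [RingHomClass F R S]

theorem map_mul_mem_idealIntCl (f : F) (c : S) {J : Ideal S} {s : ℕ} (hs : 0 < s) {a : ℕ → R}
    (ha : ∀ i ∈ Finset.Icc 1 s, f (a i) * c ^ i ∈ J ^ i)
    (hx : x ^ s + ∑ i ∈ Finset.Icc 1 s, a i * x ^ (s - i) = 0) : f x * c ∈ idealIntCl J := by
  refine ⟨s, hs, fun i => f (a i) * c ^ i, ha, ?_⟩
  have hterm : ∀ i ∈ Finset.Icc 1 s,
      f (a i) * c ^ i * (f x * c) ^ (s - i) = f (a i * x ^ (s - i)) * c ^ s := by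
    intro i hi
    rw [map_mul, map_pow, mul_pow, ← pow_mul_pow_sub c (Finset.mem_Icc.1 hi).2]
    ring
  rw [Finset.sum_congr rfl hterm, ← Finset.sum_mul, ← map_sum, mul_pow, ← map_pow, ← add_mul,
    ← map_add, hx, map_zero, zero_mul]

theorem map_mem_idealIntCl (f : F) (hx : x ∈ idealIntCl I) :
    f x ∈ idealIntCl (I.map f) := by
  obtain ⟨s, hs, a, ha, hx⟩ := hx
  simpa using map_mul_mem_idealIntCl f 1 hs
    (fun i hi => by simpa [Ideal.map_pow] using Ideal.mem_map_of_mem f (ha i hi)) hx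

theorem exists_map_mul_pow_mem_idealIntCl (f : F) (t : S)
    {J : Ideal S} (h : ∀ i, ∀ b ∈ I ^ i, ∀ᶠ m in atTop, f b * t ^ m ∈ J ^ i)
    (hx : x ∈ idealIntCl I) : ∃ N, f x * t ^ N ∈ idealIntCl J := by
  obtain ⟨s, hs, a, ha, hx⟩ := hx
  have hN : ∀ᶠ N in atTop, ∀ i ∈ Finset.Icc 1 s, f (a i) * (t ^ N) ^ i ∈ J ^ i := by
    refine (eventually_all_finset _).2 fun i hi => ?_
    filter_upwards [(tendsto_id.nsmul_atTop (Finset.mem_Icc.1 hi).1).eventually (h i _ (ha i hi))]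
      with N hN
    rwa [← pow_mul', ← smul_eq_mul]
  obtain ⟨N, hN⟩ := hN.exists
  exact ⟨N, map_mul_mem_idealIntCl f _ hs hN hx⟩

end IdealIntCl

section MonomialIdeal

variable {k : Type*} [Field k]

open Pointwise

theorem IsMonomialIdeal.pow {σ : Type*} {J : Ideal (MvPolynomial σ k)} (hJ : IsMonomialIdeal J)
    (i : ℕ) : IsMonomialIdeal (J ^ i) := by
  induction i with
  | zero => exact ⟨{0}, by simp [Ideal.one_eq_top]⟩
  | succ i ih =>
    obtain ⟨G, hG⟩ := ih
    obtain ⟨G₀, hG₀⟩ := hJ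
    refine ⟨G + G₀, ?_⟩
    rw [pow_succ, hG, hG₀, Ideal.span_mul_span', ← Set.image2_add, ← Set.image2_mul,
      Set.image_image2, Set.image2_image_left, Set.image2_image_right]
    simp only [monomial_mul, one_mul]

variable {n : ℕ}

theorem deleteLastVar_rename (p : MvPolynomial (Fin n) k) :
    deleteLastVar k n (rename Fin.castSucc p) = p := by
  simp only [deleteLastVar, AlgHom.toRingHom_eq_coe, RingHom.coe_coe, aeval_rename]
  simp [Function.comp_def]

theorem deleteLastVar_X_last : deleteLastVar k n (X (Fin.last n)) = 1 := by
  simp [deleteLastVar]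

theorem rename_deleteLastVar_monomial_mul_X_last_pow (d : Fin (n + 1) →₀ ℕ) :
    rename Fin.castSucc (deleteLastVar k n (monomial d 1)) * X (Fin.last n) ^ d (Fin.last n) =
      monomial d 1 := by
  simp [deleteLastVar, Finsupp.prod_fintype, Fin.prod_univ_castSucc, monomial_eq]

theorem IsMonomialIdeal.eventually_rename_mul_X_last_pow_mem
    {K : Ideal (MvPolynomial (Fin (n + 1)) k)} (hK : IsMonomialIdeal K)
    {b : MvPolynomial (Fin n) k} (hb : b ∈ K.map (deleteLastVar k n)) :
    ∀ᶠ m in atTop, rename Fin.castSucc b * X (Fin.last n) ^ m ∈ K := by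
  obtain ⟨G, rfl⟩ := hK
  rw [Ideal.map_span] at hb
  induction hb using Submodule.span_induction with
  | mem _ hq =>
    obtain ⟨_, ⟨d, hd, rfl⟩, rfl⟩ := hq
    filter_upwards [eventually_ge_atTop (d (Fin.last n))] with m hm
    rw [← Nat.add_sub_cancel' hm, pow_add, ← mul_assoc,
      rename_deleteLastVar_monomial_mul_X_last_pow]
    exact Ideal.mul_mem_right _ _ (Ideal.subset_span ⟨d, hd, rfl⟩)
  | zero => exact .of_forall fun _ => by simp
  | add _ _ _ _ hq hr =>
    filter_upwards [hq, hr] with m hqm hrm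
    rw [map_add, add_mul]
    exact add_mem hqm hrm
  | smul _ _ _ hq =>
    filter_upwards [hq] with m hqm
    rw [smul_eq_mul, map_mul, mul_assoc]
    exact Ideal.mul_mem_left _ _ hqm

end MonomialIdeal

theorem stmt5 (k : Type*) [Field k] (n : ℕ)
    (J : Ideal (MvPolynomial (Fin (n + 1)) k)) (hJ : IsMonomialIdeal J) :
    (Ideal.span ((deleteLastVar k n) '' idealIntCl J) :
        Set (MvPolynomial (Fin n) k)) =
      idealIntCl (Ideal.map (deleteLastVar k n) J) := by
  refine subset_antisymm ?_ fun x hx => ?_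
  · rw [← coe_idealIntClIdeal (I := J.map _), SetLike.coe_subset_coe, Ideal.span_le,
      coe_idealIntClIdeal]
    rintro _ ⟨y, hy, rfl⟩
    exact map_mem_idealIntCl _ hy
  · have hlift : ∀ i, ∀ b ∈ J.map (deleteLastVar k n) ^ i,
        ∀ᶠ m in atTop, rename Fin.castSucc b * X (Fin.last n) ^ m ∈ J ^ i :=
      fun i b hb => (hJ.pow i).eventually_rename_mul_X_last_pow_mem (by rwa [Ideal.map_pow])
    obtain ⟨N, hN⟩ := exists_map_mul_pow_mem_idealIntCl _ _ hlift hx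
    refine Ideal.subset_span ⟨_, hN, ?_⟩
    rw [map_mul, map_pow, deleteLastVar_rename, deleteLastVar_X_last, one_pow, mul_one]
end

section
/- If y^b is a minimal monomial generator of the integral closure of E_q^r, then for any nonempty sets S ⊆ T ⊊ [q] one has b_S ≤ b_T. -/
open MvPolynomial

/-- The generator `ε_i = ∏_{A ∋ i} y_A` of the extremal ideal. -/
noncomputable def extGen (k : Type*) [Field k] (q : ℕ) (i : Fin q) :
    MvPolynomial (EIdx q) k :=
  ∏ A : EIdx q, if i ∈ A.1 then X A else 1

/-- The `q`-extremal ideal `E_q = (ε_1, …, ε_q)`. -/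
noncomputable def extIdeal (k : Type*) [Field k] (q : ℕ) :
    Ideal (MvPolynomial (EIdx q) k) :=
  Ideal.span (Set.range (extGen k q))

/-- The monomial `y^b = ∏_A y_A^{b_A}`. -/
noncomputable def ymon (k : Type*) [Field k] (q : ℕ) (b : EIdx q → ℕ) :
    MvPolynomial (EIdx q) k :=
  ∏ A : EIdx q, X A ^ b A

/-!
If `b_S > b_T` for some `S ⊊ T`, apply the `k`-algebra endomorphism `ψ` with `y_S ↦ 1`,
`y_T ↦ y_S y_T`. Because `S ⊆ T`, it sends each `ε_i` to `ε_i` or `ε_i y_S`, so it maps `E_q`,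
hence the integral closure of `E_q^r`, into itself. Since `ψ(y^b) = y_S^{b_T} y^{b - b_S e_S}`,
the monomial `y^{b - e_S} = y_S^{b_S - 1 - b_T} ψ(y^b)` lies in that closure too, against
minimality.
-/

section IntegralClosure

variable {R R' : Type*} [CommRing R] [CommRing R']

lemma mul_mem_idealIntCl {J : Ideal R} (m : R) {x : R} (hx : x ∈ idealIntCl J) :
    m * x ∈ idealIntCl J := by
  obtain ⟨s, hs, a, ha, heq⟩ := hx
  refine ⟨s, hs, fun i => m ^ i * a i, fun i hi => Ideal.mul_mem_left _ _ (ha i hi), ?_⟩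
  have hterm : ∀ i ∈ Finset.Icc 1 s,
      m ^ i * a i * (m * x) ^ (s - i) = m ^ s * (a i * x ^ (s - i)) := by
    intro i hi
    rw [mul_pow, ← Nat.add_sub_cancel' (Finset.mem_Icc.mp hi).2, pow_add,
      Nat.add_sub_cancel_left]
    ring
  rw [Finset.sum_congr rfl hterm, ← Finset.mul_sum, mul_pow, ← mul_add, heq, mul_zero]

lemma map_mem_idealIntCl_s7 {F : Type*} [FunLike F R R'] [RingHomClass F R R'] {I : Ideal R}
    {I' : Ideal R'} (φ : F) (hI : I.map φ ≤ I')
    {x : R} (hx : x ∈ idealIntCl I) : φ x ∈ idealIntCl I' := by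
  obtain ⟨s, hs, a, ha, heq⟩ := hx
  refine ⟨s, hs, fun i => φ (a i), fun i hi => ?_, ?_⟩
  · have hmap : φ (a i) ∈ I.map φ ^ i :=
      Ideal.map_pow φ I i ▸ Ideal.mem_map_of_mem φ (ha i hi)
    exact Ideal.pow_right_mono hI i hmap
  · simpa using congrArg φ heq

end IntegralClosure

section Monomials

variable (k : Type*) [Field k] {q : ℕ}

lemma ymon_add (b c : EIdx q → ℕ) : ymon k q (b + c) = ymon k q b * ymon k q c := by
  simp only [ymon, Pi.add_apply, pow_add, Finset.prod_mul_distrib]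

lemma ymon_single (A : EIdx q) (n : ℕ) : ymon k q (Pi.single A n) = X A ^ n := by
  simp [ymon, Pi.single_apply, pow_ite]

lemma ymon_update (b : EIdx q → ℕ) (A : EIdx q) (n : ℕ) :
    ymon k q (Function.update b A n) = ymon k q (Function.update b A 0) * X A ^ n := by
  rw [← ymon_single, ← ymon_add]
  congr 1
  ext B
  by_cases hB : B = A <;> simp [hB]

lemma extGen_eq_ymon (i : Fin q) :
    extGen k q i = ymon k q (fun A => if i ∈ A.1 then 1 else 0) := by
  simp only [extGen, ymon, pow_ite, pow_one, pow_zero]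

noncomputable def shiftHom (S T : EIdx q) :
    MvPolynomial (EIdx q) k →ₐ[k] MvPolynomial (EIdx q) k :=
  aeval fun A => if A = S then 1 else if A = T then X S * X T else X A

variable {k}

lemma shiftHom_ymon {S T : EIdx q} (hST : S ≠ T) (b : EIdx q → ℕ) :
    shiftHom k S T (ymon k q b) = ymon k q (Function.update b S 0) * X S ^ b T := by
  have hfactor : ∀ A, (if A = S then 1 else if A = T then X S * X T else X A) ^ b A
      = X A ^ Function.update b S 0 A
        * (X S : MvPolynomial (EIdx q) k) ^ Pi.single T (b T) A := by
    intro A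
    by_cases hAS : A = S
    · subst hAS; simp [hST]
    by_cases hAT : A = T
    · subst hAT; simp [hAS, mul_pow, mul_comm]
    · simp [hAS, hAT]
  simp only [shiftHom, ymon, map_prod, map_pow, aeval_X, hfactor, Finset.prod_mul_distrib,
    Finset.prod_pow_eq_pow_sum, Finset.sum_pi_single', Finset.mem_univ, if_true]

lemma shiftHom_extGen_mem {S T : EIdx q} (hST : S ≠ T) (hsub : S.1 ⊆ T.1) (i : Fin q) :
    shiftHom k S T (extGen k q i) ∈ extIdeal k q := by
  have hgen : extGen k q i ∈ extIdeal k q := Ideal.subset_span ⟨i, rfl⟩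
  rw [extGen_eq_ymon, shiftHom_ymon hST]
  by_cases hiS : i ∈ S.1
  · rw [if_pos (hsub hiS), ← ymon_update, Function.update_eq_self_iff.mpr (by simp [hiS]),
      ← extGen_eq_ymon]
    exact hgen
  · rw [Function.update_eq_self_iff.mpr (by simp [hiS]), ← extGen_eq_ymon]
    exact Ideal.mul_mem_right _ _ hgen

lemma map_shiftHom_extIdeal_le {S T : EIdx q} (hST : S ≠ T) (hsub : S.1 ⊆ T.1) :
    (extIdeal k q).map (shiftHom k S T) ≤ extIdeal k q := by
  rw [extIdeal, Ideal.map_span, Ideal.span_le]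
  rintro _ ⟨_, ⟨i, rfl⟩, rfl⟩
  exact shiftHom_extGen_mem hST hsub i

end Monomials

theorem stmt7_general (k : Type*) [Field k] (q r : ℕ)
    (b : EIdx q → ℕ)
    -- `y^b` is a minimal monomial generator of the integral closure of `E_q^r`:
    (hmem : ymon k q b ∈ idealIntCl ((extIdeal k q) ^ r))
    (hminimal : ∀ A : EIdx q, 0 < b A →
      ymon k q (fun B => if B = A then b B - 1 else b B) ∉
        idealIntCl ((extIdeal k q) ^ r)) :
    ∀ (S T : Finset (Fin q)) (hS : S.Nonempty) (hST : S ⊆ T)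
      (_ : T ⊂ Finset.univ),
      b ⟨S, hS⟩ ≤ b ⟨T, hS.mono hST⟩ := by
  intro S T hS hST _
  set A : EIdx q := ⟨S, hS⟩
  set B : EIdx q := ⟨T, hS.mono hST⟩
  by_cases hAB : A = B
  · exact hAB ▸ le_rfl
  by_contra! hlt
  refine hminimal A (by omega) ?_
  obtain ⟨c, hc⟩ : ∃ c, b A - 1 = c + b B := ⟨b A - 1 - b B, by omega⟩
  have hdecrease : ymon k q (fun C => if C = A then b C - 1 else b C)
      = X A ^ c * shiftHom k A B (ymon k q b) := by
    have hupdate :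
        (fun C => if C = A then b C - 1 else b C) = Function.update b A (b A - 1) := by
      ext C
      by_cases hC : C = A <;> simp [hC]
    rw [hupdate, hc, ymon_update, shiftHom_ymon hAB, pow_add]
    ring
  have hmap : ((extIdeal k q) ^ r).map (shiftHom k A B) ≤ (extIdeal k q) ^ r := by
    rw [Ideal.map_pow]
    exact Ideal.pow_right_mono (map_shiftHom_extIdeal_le hAB hST) r
  rw [hdecrease]
  exact mul_mem_idealIntCl _ (map_mem_idealIntCl_s7 _ hmap hmem)

theorem stmt7 (k : Type*) [Field k] (q r : ℕ) (hq : 1 ≤ q) (hr : 1 ≤ r)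
    (b : EIdx q → ℕ)
    -- `y^b` is a minimal monomial generator of the integral closure of `E_q^r`:
    (hmem : ymon k q b ∈ idealIntCl ((extIdeal k q) ^ r))
    (hminimal : ∀ A : EIdx q, 0 < b A →
      ymon k q (fun B => if B = A then b B - 1 else b B) ∉
        idealIntCl ((extIdeal k q) ^ r)) :
    ∀ (S T : Finset (Fin q)) (hS : S.Nonempty) (hST : S ⊆ T)
      (_ : T ⊂ Finset.univ),
      b ⟨S, hS⟩ ≤ b ⟨T, hS.mono hST⟩ :=
  stmt7_general k q r b hmem hminimal
end

section
/- For q ≥ 4 and r ≥ 2, define g(r,q) = (∏_{|A|≥1} y_A)(∏_{|A|≥3} y_A) ε_1^{r−2} in S_[q]. Then g(r,q)^q ∈ (E_q^r)^q, i.e., g(r,q) satisfies the integral dependence equation z^q − g(r,q)^q = 0 over E_q^r; hence g(r,q) ∈ \overline{E_q^r}. -/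
open MvPolynomial

/-- `g(r,q) = (∏_{|A| ≥ 1} y_A)(∏_{|A| ≥ 3} y_A) ε_1^{r-2}`. -/
noncomputable def gMon (k : Type*) [Field k] (q r : ℕ) (h0 : 0 < q) :
    MvPolynomial (EIdx q) k :=
  (∏ A : EIdx q, X A) * (∏ A : EIdx q, if 3 ≤ A.1.card then X A else 1) *
    extGen k q ⟨0, h0⟩ ^ (r - 2)

/-! Each `y_A` occurs in `∏ ε_i` with exponent `|A|`, so `(∏ ε_i)^2` divides
`((∏_{|A| ≥ 1} y_A)(∏_{|A| ≥ 3} y_A))^q` exactly when `2|A| ≤ q` for `|A| ≤ 2`, which is where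
`q ≥ 4` enters. Since `∏ ε_i ∈ E_q^q`, this puts `g(r,q)^q` in `E_q^{2q} E_q^{(r-2)q} ⊆ E_q^{rq}`,
and `z^q - g(r,q)^q` is an equation of integral dependence over `E_q^r`. -/

theorem mem_idealIntCl_of_pow_mem_pow {R : Type*} [CommRing R] {J : Ideal R} {x : R} {s : ℕ}
    (hs : 0 < s) (h : x ^ s ∈ J ^ s) : x ∈ idealIntCl J := by
  refine ⟨s, hs, fun i => if i = s then -x ^ s else 0, fun i _ => ?_, ?_⟩
  · dsimp only
    split_ifs with hi
    · exact neg_mem (hi ▸ h)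
    · exact zero_mem _
  · simp only [ite_mul, zero_mul, Finset.sum_ite_eq', Finset.mem_Icc, Nat.sub_self, pow_zero,
      mul_one]
    rw [if_pos ⟨hs, le_rfl⟩, add_neg_cancel]

section ExtremalIdeal

variable {k : Type*} [Field k] {q : ℕ}

theorem prod_extGen :
    ∏ i, extGen k q i = ∏ A : EIdx q, (X A : MvPolynomial (EIdx q) k) ^ A.1.card := by
  classical
  simp only [extGen]
  rw [Finset.prod_comm]
  refine Finset.prod_congr rfl fun A _ => ?_
  rw [Finset.prod_ite_mem, Finset.univ_inter, Finset.prod_const]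

theorem prod_extGen_mem_pow : ∏ i, extGen k q i ∈ extIdeal k q ^ q := by
  have h := Ideal.prod_mem_prod (s := Finset.univ) (I := fun _ => extIdeal k q)
    fun i _ => Ideal.subset_span (Set.mem_range_self i)
  rwa [Finset.prod_const, Finset.card_univ, Fintype.card_fin] at h

theorem prod_extGen_sq_dvd (hq : 4 ≤ q) :
    (∏ i, extGen k q i) ^ 2 ∣
      ((∏ A : EIdx q, X A) * ∏ A : EIdx q, if 3 ≤ A.1.card then X A else 1) ^ q := by
  rw [prod_extGen, ← Finset.prod_mul_distrib, ← Finset.prod_pow, ← Finset.prod_pow]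
  refine Finset.prod_dvd_prod_of_dvd _ _ fun A _ => ?_
  have hA : A.1.card ≤ q := by simpa using Finset.card_le_univ A.1
  rw [← pow_mul]
  split_ifs with h3
  · rw [← sq, ← pow_mul]
    exact pow_dvd_pow _ (by omega)
  · rw [mul_one]
    exact pow_dvd_pow _ (by omega)

theorem gMon_pow_mem (hq : 4 ≤ q) (r : ℕ) (h0 : 0 < q) :
    gMon k q r h0 ^ q ∈ extIdeal k q ^ (r * q) := by
  have hP := Ideal.mem_of_dvd _ (prod_extGen_sq_dvd (k := k) hq)
    (Ideal.pow_mem_pow prod_extGen_mem_pow 2)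
  rw [← pow_mul] at hP
  have hε : (extGen k q ⟨0, h0⟩ ^ (r - 2)) ^ q ∈ extIdeal k q ^ ((r - 2) * q) := by
    rw [← pow_mul]
    exact Ideal.pow_mem_pow (Ideal.subset_span (Set.mem_range_self _)) _
  have hrq : r * q ≤ q * 2 + (r - 2) * q := by
    rw [mul_comm q 2, ← add_mul]
    exact Nat.mul_le_mul_right _ (by omega)
  rw [gMon, mul_pow]
  refine Ideal.pow_le_pow_right hrq ?_
  rw [pow_add]
  exact Ideal.mul_mem_mul hP hε

end ExtremalIdeal

theorem stmt9 (k : Type*) [Field k] (q r : ℕ) (hq : 4 ≤ q) :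
    gMon k q r (by omega) ^ q ∈ ((extIdeal k q) ^ r) ^ q ∧
    gMon k q r (by omega) ∈ idealIntCl ((extIdeal k q) ^ r) := by
  have hmem : gMon k q r (by omega) ^ q ∈ ((extIdeal k q) ^ r) ^ q := by
    rw [← pow_mul]
    exact gMon_pow_mem hq r _
  exact ⟨hmem, mem_idealIntCl_of_pow_mem_pow (by omega) hmem⟩
end

section
/- For q ≥ 4 and r ≥ 2, the monomial g(r,q) = (∏_{|A|≥1} y_A)(∏_{|A|≥3} y_A) ε_1^{r−2} does not belong to E_q^r. Equivalently, for every a = (a_1,…,a_q) ∈ ℕ^q with a_1+⋯+a_q = r, there exists a nonempty A ⊆ [q] such that the exponent of y_A in g(r,q) is strictly less than ∑_{i∈A} a_i. -/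
open MvPolynomial

/-!
Since `E_q` is generated by monomials, `E_q^r` is spanned by the monomials `ε^a` with `|a| = r`,
and a monomial lies in a monomial ideal iff one of the generators divides it. So `g(r,q) ∉ E_q^r`
amounts to the second conjunct: no `ε^a` divides `g(r,q)`.

For that, let `a` have total `r` (the index `1` of the paper is `0 : Fin q`). If at most two
indices other than `1` together carry mass at least `2`, the set `A` of those indices has
exponent `1 < |a|_A`. Otherwise all of `a` lives on `A = {1, i}` for a single `i`, where the
exponent is `1 + (r - 2) < r = |a|_A`.
-/

open Finset

namespace MvPolynomial

variable {σ R : Type*} [CommSemiring R]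

theorem prod_X_eq_monomial (s : Finset σ) :
    ∏ A ∈ s, (X A : MvPolynomial σ R) = monomial (∑ A ∈ s, Finsupp.single A 1) 1 := by
  simp only [X, monomial_sum_one]

theorem monomial_mem_span_monomial_image_iff [Nontrivial R] {d : σ →₀ ℕ} {s : Set (σ →₀ ℕ)} :
    monomial d (1 : R) ∈ Ideal.span ((monomial · 1) '' s) ↔ ∃ e ∈ s, e ≤ d := by
  classical
  simp [mem_ideal_span_monomial_image, support_monomial]

theorem pow_span_range_monomial_le {ι : Type*} [Fintype ι] (μ : ι → σ →₀ ℕ) (n : ℕ) :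
    Ideal.span (Set.range fun i => monomial (μ i) (1 : R)) ^ n ≤
      Ideal.span ((monomial · 1) '' {e | ∃ a : ι → ℕ, ∑ i, a i = n ∧ e = ∑ i, a i • μ i}) := by
  classical
  induction n with
  | zero =>
    rw [pow_zero, Ideal.one_eq_top, top_le_iff, Ideal.eq_top_iff_one]
    exact Ideal.subset_span ⟨0, ⟨0, by simp⟩, rfl⟩
  | succ n ih =>
    rw [pow_succ]
    refine (Ideal.mul_mono_left ih).trans ?_
    rw [Ideal.span_mul_span']
    refine Ideal.span_mono ?_
    rintro _ ⟨_, ⟨e, ⟨a, ha, rfl⟩, rfl⟩, _, ⟨j, rfl⟩, rfl⟩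
    refine ⟨∑ i, a i • μ i + μ j, ⟨a + Pi.single j 1, ?_, ?_⟩, by simp only [monomial_mul, mul_one]⟩
    · simp [sum_add_distrib, ha]
    · simp [add_smul, sum_add_distrib, Pi.single_apply]

theorem monomial_notMem_pow_span_range_monomial [Nontrivial R] {ι : Type*} [Fintype ι]
    (μ : ι → σ →₀ ℕ) {n : ℕ} {d : σ →₀ ℕ}
    (h : ∀ a : ι → ℕ, ∑ i, a i = n → ¬ ∑ i, a i • μ i ≤ d) :
    monomial d (1 : R) ∉ Ideal.span (Set.range fun i => monomial (μ i) (1 : R)) ^ n := by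
  classical
  intro hd
  obtain ⟨_, ⟨a, ha, rfl⟩, hle⟩ :=
    monomial_mem_span_monomial_image_iff.mp (pow_span_range_monomial_le μ n hd)
  exact h a ha hle

end MvPolynomial

theorem Finsupp.sum_single_one_apply {σ : Type*} [DecidableEq σ] (s : Finset σ) (A : σ) :
    (∑ B ∈ s, Finsupp.single B 1) A = if A ∈ s then 1 else 0 := by
  simp [Finsupp.finsetSum_apply, Finsupp.single_apply]

section ExtremalIdeal

variable {q : ℕ}

noncomputable def extExp (q : ℕ) (i : Fin q) : EIdx q →₀ ℕ :=
  ∑ A with i ∈ A.1, Finsupp.single A 1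

theorem extExp_apply (i : Fin q) (A : EIdx q) : extExp q i A = if i ∈ A.1 then 1 else 0 := by
  classical
  rw [extExp, Finsupp.sum_single_one_apply]
  simp

theorem sum_smul_extExp_apply (a : Fin q → ℕ) (A : EIdx q) :
    (∑ i, a i • extExp q i) A = ∑ i ∈ A.1, a i := by
  simp [Finsupp.finsetSum_apply, extExp_apply]

theorem extGen_eq_monomial (k : Type*) [Field k] (i : Fin q) :
    extGen k q i = monomial (extExp q i) 1 := by
  rw [extGen, ← prod_filter, prod_X_eq_monomial, extExp]

noncomputable def gExp (q r : ℕ) (h0 : 0 < q) : EIdx q →₀ ℕ :=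
  Finsupp.equivFunOnFinite.symm fun A =>
    (if 3 ≤ A.1.card then 2 else 1) + (if (⟨0, h0⟩ : Fin q) ∈ A.1 then r - 2 else 0)

theorem gMon_eq_monomial (k : Type*) [Field k] (r : ℕ) (h0 : 0 < q) :
    gMon k q r h0 = monomial (gExp q r h0) 1 := by
  classical
  rw [gMon, ← prod_filter, prod_X_eq_monomial, prod_X_eq_monomial, extGen_eq_monomial,
    monomial_pow, monomial_mul, monomial_mul, one_pow, one_mul, one_mul]
  refine congrArg (monomial · 1) (Finsupp.ext fun A => ?_)
  simp only [gExp, Finsupp.coe_add, Finsupp.coe_smul, Pi.add_apply, Pi.smul_apply,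
    Finsupp.sum_single_one_apply, extExp_apply, Finsupp.coe_equivFunOnFinite_symm]
  split_ifs <;> simp_all

theorem gExp_of_card_le_two (r : ℕ) (h0 : 0 < q) {A : EIdx q} (hA : A.1.card ≤ 2) :
    gExp q r h0 A = 1 + if (⟨0, h0⟩ : Fin q) ∈ A.1 then r - 2 else 0 := by
  simp [gExp, show ¬ 3 ≤ A.1.card by omega]

theorem exists_gExp_lt_sum {r : ℕ} (h0 : 0 < q) (hr : 2 ≤ r) (a : Fin q → ℕ)
    (ha : ∑ i, a i = r) : ∃ A : EIdx q, gExp q r h0 A < ∑ i ∈ A.1, a i := by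
  classical
  set z : Fin q := ⟨0, h0⟩
  by_cases heavy : ∃ i j, z ∉ ({i, j} : Finset (Fin q)) ∧ 2 ≤ ∑ x ∈ {i, j}, a x
  · obtain ⟨i, j, hz, hij⟩ := heavy
    refine ⟨⟨{i, j}, insert_nonempty i {j}⟩, ?_⟩
    show _ < ∑ x ∈ {i, j}, a x
    rw [gExp_of_card_le_two r h0 card_le_two, if_neg hz]
    omega
  push Not at heavy
  obtain ⟨i, hi⟩ : ∃ i, ∀ x, x ≠ z → x ≠ i → a x = 0 := by
    by_cases h : ∃ i, i ≠ z ∧ a i ≠ 0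
    · obtain ⟨i, hiz, hi⟩ := h
      refine ⟨i, fun x hxz hxi => ?_⟩
      have := heavy i x (by simp [hiz.symm, hxz.symm])
      rw [sum_pair (Ne.symm hxi)] at this
      omega
    · push Not at h
      exact ⟨z, fun x hxz _ => h x hxz⟩
  have hsum : ∑ x ∈ {z, i}, a x = r := by
    rw [← ha]
    refine sum_subset (subset_univ _) fun x _ hx => ?_
    simp only [mem_insert, mem_singleton, not_or] at hx
    exact hi x hx.1 hx.2
  refine ⟨⟨{z, i}, insert_nonempty z {i}⟩, ?_⟩
  rw [gExp_of_card_le_two r h0 card_le_two, if_pos (mem_insert_self z {i}), hsum]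
  omega

end ExtremalIdeal

theorem stmt10 (k : Type*) [Field k] (q r : ℕ) (hq : 4 ≤ q) (hr : 2 ≤ r) :
    gMon k q r (by omega) ∉ (extIdeal k q) ^ r ∧
    -- equivalently: for every `a` with `∑ a_i = r`, the exponent of some `y_A`
    -- in `g(r,q)` is strictly less than `∑_{i ∈ A} a_i`
    (∀ a : Fin q → ℕ, (∑ i, a i) = r →
      ∃ A : EIdx q,
        ((if 3 ≤ A.1.card then 2 else 1) +
            (if (⟨0, by omega⟩ : Fin q) ∈ A.1 then r - 2 else 0)) <
          ∑ i ∈ A.1, a i) := by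
  have h0 : 0 < q := by omega
  have key := exists_gExp_lt_sum h0 hr
  refine ⟨?_, key⟩
  have hgen : extGen k q = fun i => monomial (extExp q i) 1 :=
    funext (extGen_eq_monomial k)
  rw [gMon_eq_monomial, extIdeal, hgen]
  refine monomial_notMem_pow_span_range_monomial _ fun a ha hle => ?_
  obtain ⟨A, hA⟩ := key a ha
  exact hA.not_ge (sum_smul_extExp_apply a A ▸ hle A)
end

section
/- For q ≥ 1 and each nonempty X ⊆ [q], define f_X = (∏_{X⊆A} y_A^2)(∏_{A : X∩A ≠ ∅ and X∩([q]\A) ≠ ∅} y_A), products over nonempty A ⊆ [q]. Then: (1) f_{{i}} = ε_i^2; (2) f_{{i,j}} = ε_i ε_j for i ≠ j; (3) f_{[q]} = y^{1 + e_{[q]}} (all variables to the first power, except y_{[q]} squared); (4) deg f_X = 2^q; (5) f_X ≠ f_Y whenever X ≠ Y. -/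
open MvPolynomial

/-- `f_X = (∏_{X ⊆ A} y_A²) (∏_{X∩A ≠ ∅, X∩Aᶜ ≠ ∅} y_A)`. -/
noncomputable def fMon (k : Type*) [Field k] (q : ℕ) (Xs : Finset (Fin q)) :
    MvPolynomial (EIdx q) k :=
  (∏ A : EIdx q, if Xs ⊆ A.1 then X A ^ 2 else 1) *
    (∏ A : EIdx q,
      if (Xs ∩ A.1).Nonempty ∧ (Xs ∩ A.1ᶜ).Nonempty then X A else 1)

/-!
The exponent of `y_A` in `f_X` is `2`, `1` or `0` according as `A` contains `X`, splits `X`, or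
misses `X`. Complementation `A ↦ Aᶜ` swaps "contains" with "misses" and preserves "splits", so
the exponents of `y_A` and `y_{Aᶜ}` add up to `2`; summing over all `A` gives degree `2 ^ q`.
The exponents of the `y_{i}` vanish exactly for `i ∉ X`, so `f_X` determines `X`.
-/

namespace MvPolynomial

variable {R σ : Type*} [CommSemiring R] [Fintype σ]

theorem prod_X_pow_eq_monomial_equivFunOnFinite (g : σ → ℕ) :
    ∏ i, (X i : MvPolynomial σ R) ^ g i = monomial (Finsupp.equivFunOnFinite.symm g) 1 := by
  rw [monomial_eq, C_1, one_mul, Finsupp.prod_fintype _ _ fun _ => pow_zero _]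
  rfl

variable [Nontrivial R]

theorem totalDegree_prod_X_pow (g : σ → ℕ) :
    (∏ i, (X i : MvPolynomial σ R) ^ g i).totalDegree = ∑ i, g i := by
  rw [prod_X_pow_eq_monomial_equivFunOnFinite, totalDegree_monomial _ one_ne_zero,
    Finsupp.equivFunOnFinite_symm_sum]

theorem prod_X_pow_injective :
    Function.Injective fun g : σ → ℕ => ∏ i, (X i : MvPolynomial σ R) ^ g i := by
  intro g h hgh
  simp only [prod_X_pow_eq_monomial_equivFunOnFinite] at hgh
  exact Finsupp.equivFunOnFinite.symm.injective (monomial_left_injective one_ne_zero hgh)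

end MvPolynomial

theorem Finset.sum_subtype_nonempty {α M : Type*} [Fintype α] [AddCommMonoid M]
    (g : Finset α → M) (h : g ∅ = 0) :
    ∑ A : {A : Finset α // A.Nonempty}, g A.1 = ∑ A, g A := by
  classical
  rw [← Finset.sum_subtype (Finset.univ.erase ∅) (by simp [Finset.nonempty_iff_ne_empty]),
    Finset.sum_erase _ h]

theorem Finset.Nonempty.not_disjoint_of_subset {α : Type*} {Xs A : Finset α} (hXs : Xs.Nonempty)
    (hsub : Xs ⊆ A) : ¬Disjoint Xs A :=
  fun hdisj => hXs.ne_empty (hdisj.eq_bot_of_le hsub)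

section Exponent

variable {α : Type*} [DecidableEq α]

def fMonExp (Xs A : Finset α) : ℕ :=
  if Xs ⊆ A then 2 else if Disjoint Xs A then 0 else 1

theorem fMonExp_singleton (i : α) (A : Finset α) :
    fMonExp {i} A = if i ∈ A then 2 else 0 := by
  by_cases h : i ∈ A <;> simp [fMonExp, h]

theorem fMonExp_pair (i j : α) (A : Finset α) :
    fMonExp {i, j} A = (if i ∈ A then 1 else 0) + (if j ∈ A then 1 else 0) := by
  by_cases hi : i ∈ A <;> by_cases hj : j ∈ A <;>
    simp [fMonExp, hi, hj, Finset.insert_subset_iff]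

theorem fMonExp_eq_zero_iff {Xs : Finset α} (hXs : Xs.Nonempty) (A : Finset α) :
    fMonExp Xs A = 0 ↔ Disjoint Xs A := by
  have := hXs.not_disjoint_of_subset (A := A)
  unfold fMonExp
  split_ifs <;> simp_all

variable [Fintype α]

theorem fMonExp_univ {A : Finset α} (hA : A.Nonempty) :
    fMonExp Finset.univ A = if A = Finset.univ then 2 else 1 := by
  obtain ⟨x, hx⟩ := hA
  have : ¬Disjoint Finset.univ A := Finset.not_disjoint_iff.2 ⟨x, Finset.mem_univ x, hx⟩
  by_cases h : A = Finset.univ <;> simp [fMonExp, h, this]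

theorem fMonExp_add_fMonExp_compl {Xs : Finset α} (hXs : Xs.Nonempty) (A : Finset α) :
    fMonExp Xs A + fMonExp Xs Aᶜ = 2 := by
  have := hXs.not_disjoint_of_subset (A := A)
  unfold fMonExp
  simp only [Finset.subset_compl_iff_disjoint_right, disjoint_compl_right_iff]
  split_ifs <;> simp_all

theorem sum_fMonExp {Xs : Finset α} (hXs : Xs.Nonempty) :
    ∑ A, fMonExp Xs A = 2 ^ Fintype.card α := by
  have hcompl : ∑ A, fMonExp Xs Aᶜ = ∑ A, fMonExp Xs A :=
    Fintype.sum_bijective compl compl_involutive.bijective _ _ fun _ => rfl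
  have hdouble : 2 * ∑ A, fMonExp Xs A = 2 * 2 ^ Fintype.card α :=
    calc 2 * ∑ A, fMonExp Xs A = ∑ A, (fMonExp Xs A + fMonExp Xs Aᶜ) := by
          rw [Finset.sum_add_distrib, hcompl, two_mul]
      _ = ∑ _A : Finset α, 2 := Finset.sum_congr rfl fun A _ => fMonExp_add_fMonExp_compl hXs A
      _ = 2 * 2 ^ Fintype.card α := by simp [Fintype.card_finset, mul_comm]
  omega

end Exponent

theorem eq_of_fMonExp_singleton_eq {α : Type*} [DecidableEq α] {Xs Ys : Finset α}
    (hXs : Xs.Nonempty) (hYs : Ys.Nonempty) (h : ∀ x, fMonExp Xs {x} = fMonExp Ys {x}) :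
    Xs = Ys := by
  have mem_iff :
      ∀ {Zs : Finset α}, Zs.Nonempty → ∀ x, x ∈ Zs ↔ fMonExp Zs {x} ≠ 0 := by
    intro Zs hZs x
    rw [Ne, fMonExp_eq_zero_iff hZs, Finset.disjoint_singleton_right, not_not]
  ext x
  rw [mem_iff hXs, mem_iff hYs, h]

theorem fMon_eq_prod (k : Type*) [Field k] (q : ℕ) (Xs : Finset (Fin q)) :
    fMon k q Xs = ∏ A : EIdx q, X A ^ fMonExp Xs A.1 := by
  rw [fMon, ← Finset.prod_mul_distrib]
  refine Finset.prod_congr rfl fun A _ => ?_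
  simp only [← Finset.sdiff_eq_inter_compl, Finset.sdiff_nonempty,
    ← Finset.not_disjoint_iff_nonempty_inter]
  unfold fMonExp
  split_ifs <;> simp_all

theorem extGen_eq_prod (k : Type*) [Field k] (q : ℕ) (i : Fin q) :
    extGen k q i = ∏ A : EIdx q, X A ^ (if i ∈ A.1 then 1 else 0) := by
  simp only [extGen, pow_ite, pow_one, pow_zero]

theorem stmt17 (k : Type*) [Field k] (q : ℕ) (hq : 1 ≤ q) :
    (∀ i : Fin q, fMon k q {i} = extGen k q i ^ 2) ∧
    (∀ i j : Fin q, i ≠ j → fMon k q {i, j} = extGen k q i * extGen k q j) ∧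
    (fMon k q Finset.univ = (∏ A : EIdx q, X A) *
      X (⟨Finset.univ, ⟨⟨0, by omega⟩, Finset.mem_univ _⟩⟩ : EIdx q)) ∧
    (∀ Xs : Finset (Fin q), Xs.Nonempty → (fMon k q Xs).totalDegree = 2 ^ q) ∧
    (∀ Xs Ys : Finset (Fin q), Xs.Nonempty → Ys.Nonempty → Xs ≠ Ys →
      fMon k q Xs ≠ fMon k q Ys) := by
  refine ⟨fun i => ?_, fun i j _ => ?_, ?_, fun Xs hXs => ?_, fun Xs Ys hXs hYs hne heq => ?_⟩
  · rw [fMon_eq_prod, extGen_eq_prod, ← Finset.prod_pow]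
    refine Finset.prod_congr rfl fun A _ => ?_
    rw [fMonExp_singleton, ← pow_mul]
    split_ifs <;> rfl
  · rw [fMon_eq_prod, extGen_eq_prod, extGen_eq_prod, ← Finset.prod_mul_distrib]
    exact Finset.prod_congr rfl fun A _ => by rw [fMonExp_pair, pow_add]
  · rw [fMon_eq_prod, ← Fintype.prod_ite_eq' _ (X : EIdx q → MvPolynomial (EIdx q) k),
      ← Finset.prod_mul_distrib]
    refine Finset.prod_congr rfl fun A _ => ?_
    rw [fMonExp_univ A.2]
    split_ifs <;> simp_all [Subtype.ext_iff, sq]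
  · rw [fMon_eq_prod, totalDegree_prod_X_pow,
      Finset.sum_subtype_nonempty (fMonExp Xs) (by simp [fMonExp_eq_zero_iff hXs]),
      sum_fMonExp hXs, Fintype.card_fin]
  · rw [fMon_eq_prod, fMon_eq_prod] at heq
    have hexp := prod_X_pow_injective heq
    exact hne (eq_of_fMonExp_singleton_eq hXs hYs fun x =>
      congrFun hexp ⟨{x}, Finset.singleton_nonempty x⟩)
end
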